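/- arXiv:2510.17799 — 2 statements merged into one kernel-verified Lean document; each statement's English description precedes it below -/
import Mathlib

section
/- Every LR-string X satisfies ded_d(X) = ed_d(L(X), T(R(X))), where ded_d is the deletion-only Dyck edit distance, ed_d is the deletion-only string edit distance, L(X) is the opening-parenthesis prefix, R(X) is the closing-parenthesis suffix, and T denotes the transpose. -/
/-- A parenthesis character: `true` = opening, `false` = closing; the second
component is the type of the parenthesis. -/
abbrev Paren := Bool × ℕ

/-- The Dyck language of well-balanced typed parenthesis strings. -/
inductive Dyck : List Paren → Prop where
  | nil : Dyck []
  | wrap {Y : List Paren} (t : ℕ) : Dyck Y → Dyck ((true, t) :: (Y ++ [(false, t)]))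
  | app {Y Z : List Paren} : Dyck Y → Dyck Z → Dyck (Y ++ Z)

/-- Deletion-only Dyck edit distance: minimum number of character deletions
placing `X` in the Dyck language. -/
noncomputable def dedDel (X : List Paren) : ℕ :=
  sInf {d | ∃ Y : List Paren, Y.Sublist X ∧ Dyck Y ∧ d = X.length - Y.length}

/-- Deletion-only string edit distance: minimum number of deletions in an alignment
of `A` and `B`, i.e. `|A| + |B| - 2·LCS(A,B)`. -/
noncomputable def edDel (A B : List Paren) : ℕ :=
  sInf {d | ∃ Z : List Paren, Z.Sublist A ∧ Z.Sublist B ∧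
      d = A.length + B.length - 2 * Z.length}

/-- The transpose of a parenthesis string: reverse it and flip every parenthesis,
keeping its type. -/
def transpose (Y : List Paren) : List Paren :=
  Y.reverse.map (fun p => (!p.1, p.2))

lemma transpose_length (Y : List Paren) : (transpose Y).length = Y.length := by
  simp [transpose]

lemma transpose_nil : transpose [] = [] := rfl

lemma transpose_cons (x : Paren) (l : List Paren) :
    transpose (x :: l) = transpose l ++ [(!x.1, x.2)] := by
  simp [transpose]

lemma transpose_transpose (Y : List Paren) : transpose (transpose Y) = Y := by
  simp only [transpose, List.map_reverse, List.reverse_reverse, List.map_map]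
  have : ((fun p : Paren => (!p.1, p.2)) ∘ fun p : Paren => (!p.1, p.2)) = id := by
    funext p; simp
  rw [this, List.map_id]

lemma transpose_sublist {A B : List Paren} (h : A.Sublist B) :
    (transpose A).Sublist (transpose B) :=
  (h.reverse).map _

lemma transpose_eq_nil {Y : List Paren} (h : transpose Y = []) : Y = [] := by
  have := congrArg List.length h
  simp [transpose_length] at this
  exact this

lemma dyck_open_trans : ∀ (W : List Paren), (∀ p ∈ W, p.1 = true) →
    Dyck (W ++ transpose W) := by
  intro W
  induction W with
  | nil => intro _; exact Dyck.nil
  | cons a W ih =>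
    intro h
    have ha : a = (true, a.2) := by
      have := h a (by simp)
      exact Prod.ext this rfl
    have hW : ∀ p ∈ W, p.1 = true := fun p hp => h p (by simp [hp])
    rw [transpose_cons, ha]
    have : ((true, a.2) :: W) ++ (transpose W ++ [(!(true, a.2).1, (true, a.2).2)])
        = (true, a.2) :: ((W ++ transpose W) ++ [(false, a.2)]) := by
      simp
    rw [this]
    exact Dyck.wrap a.2 (ih hW)

lemma dyck_split : ∀ (Y : List Paren), Dyck Y → ∀ A B : List Paren,
    Y = A ++ B → (∀ p ∈ A, p.1 = true) → (∀ p ∈ B, p.1 = false) →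
    B = transpose A := by
  intro Y hY
  induction hY with
  | nil =>
    intro A B hAB _ _
    have ⟨hA, hB⟩ := List.append_eq_nil_iff.mp hAB.symm
    subst hA hB; rfl
  | wrap t hY ih =>
    intro A B hAB hA hB
    rename_i Y'
    match A with
    | [] =>
      simp at hAB
      have := hB (true, t) (by rw [← hAB]; simp)
      simp at this
    | a :: A' =>
      simp at hAB
      obtain ⟨ha, htail⟩ := hAB
      rcases List.eq_nil_or_concat B with hBnil | ⟨B', b, hBc⟩
      · subst hBnil
        simp at htail
        have := hA (false, t) (by simp [← ha, ← htail])
        simp at this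
      · subst hBc
        rw [List.concat_eq_append, ← List.append_assoc] at htail
        have hlast := List.append_inj' htail.symm rfl
        obtain ⟨hmid, hb⟩ := hlast
        have hA' : ∀ p ∈ A', p.1 = true := fun p hp => hA p (by simp [hp])
        have hB' : ∀ p ∈ B', p.1 = false := fun p hp => hB p (by simp [hp])
        have hind := ih A' B' hmid.symm hA' hB'
        rw [List.concat_eq_append, hind, transpose_cons, ← ha]
        simp at hb
        rw [hb]
        simp
  | app hY hZ ihY ihZ =>
    intro A B hAB hA hB
    rename_i Y' Z'
    rcases List.append_eq_append_iff.mp hAB.symm with ⟨m, hYm, hBm⟩ | ⟨m, hAm, hZm⟩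
    · have hZnil : Z' = [] := by
        have hZclosed : ∀ p ∈ Z', p.1 = false := fun p hp =>
          hB p (by simp [hBm, hp])
        have := ihZ [] Z' (by simp) (by simp) hZclosed
        rw [this]; rfl
      subst hZnil
      simp at hBm
      rw [hBm]
      exact ihY A m hYm hA (fun p hp => hB p (by simp [hBm, hp]))
    · have hYnil : Y' = [] := by
        have hYopen : ∀ p ∈ Y', p.1 = true := fun p hp =>
          hA p (by simp [hAm, hp])
        have := ihY Y' [] (by simp) hYopen (by simp)
        exact transpose_eq_nil this.symm
      subst hYnil
      simp at hAm
      rw [← hAm] at hZm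
      exact ihZ A B hZm hA hB

/-- Every LR-string `X = L · R` (opening prefix `L`, closing suffix `R`) satisfies
`ded_d(X) = ed_d(L, T(R))`. -/
theorem stmt4 (L R : List Paren)
    (hL : ∀ p ∈ L, p.1 = true) (hR : ∀ p ∈ R, p.1 = false) :
    dedDel (L ++ R) = edDel L (transpose R) := by
  unfold dedDel edDel
  congr 1
  ext d
  simp only [Set.mem_setOf_eq]
  constructor
  · rintro ⟨Y, hsub, hdyck, hd⟩
    obtain ⟨A, B, hYAB, hAL, hBR⟩ := List.sublist_append_iff.mp hsub
    have hAopen : ∀ p ∈ A, p.1 = true := fun p hp => hL p (hAL.subset hp)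
    have hBclosed : ∀ p ∈ B, p.1 = false := fun p hp => hR p (hBR.subset hp)
    have hBA : B = transpose A := dyck_split Y hdyck A B hYAB hAopen hBclosed
    refine ⟨A, hAL, ?_, ?_⟩
    · have := transpose_sublist hBR
      rw [hBA, transpose_transpose] at this
      exact this
    · have h1 : Y.length = 2 * A.length := by
        rw [hYAB, hBA]
        simp [transpose_length]; ring
      rw [hd, h1]
      simp [transpose_length]
  · rintro ⟨Z, hZL, hZR, hd⟩
    have hZopen : ∀ p ∈ Z, p.1 = true := fun p hp => hL p (hZL.subset hp)
    refine ⟨Z ++ transpose Z, ?_, dyck_open_trans Z hZopen, ?_⟩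
    · refine List.Sublist.append hZL ?_
      have := transpose_sublist hZR
      rw [transpose_transpose] at this
      exact this
    · rw [hd]
      simp [transpose_length]
      ring_nf
end

section
/- Let X be a parenthesis string with ded_d(X) <= k, and let X-hat be the string obtained from X by iteratively removing adjacent matching pairs (an opening parenthesis immediately followed by a closing parenthesis of the same type) until none remain. Then the number of maximal LR-segments of X-hat is O(ded_d(X)), and in particular X-hat has O(k) maximal LR-segments. -/
/-- One reduction step: remove an adjacent pair consisting of an opening parenthesis
immediately followed by a closing parenthesis of the same type. -/
def RemStep (X Y : List Paren) : Prop :=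
  ∃ u v t, X = u ++ (true, t) :: (false, t) :: v ∧ Y = u ++ v

/-- Number of boundaries between maximal LR-segments of `Y`: the number of positions
where a closing parenthesis is immediately followed by an opening one.
For nonempty `Y`, the number of maximal LR-segments is `descents Y + 1`. -/
def descents (Y : List Paren) : ℕ :=
  (Y.zip Y.tail).countP (fun p => !p.1.1 && p.2.1)

def pstep (s : List Paren) (c : Paren) : List Paren :=
  match c, s with
  | (false, t), (true, t') :: s' => if t = t' then s' else c :: s
  | _, _ => c :: s

def sfold (s l : List Paren) : List Paren := l.foldl pstep s

@[simp] lemma sfold_nil (s : List Paren) : sfold s [] = s := rfl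

@[simp] lemma sfold_cons (s : List Paren) (c : Paren) (l : List Paren) :
    sfold s (c :: l) = sfold (pstep s c) l := rfl

lemma sfold_append (s l₁ l₂ : List Paren) :
    sfold s (l₁ ++ l₂) = sfold (sfold s l₁) l₂ := by
  simp [sfold, List.foldl_append]

@[simp] lemma pstep_open (s : List Paren) (t : ℕ) : pstep s (true, t) = (true, t) :: s := by
  cases s with
  | nil => rfl
  | cons a s => rfl

@[simp] lemma pstep_pop (s : List Paren) (t : ℕ) :
    pstep ((true, t) :: s) (false, t) = s := by
  simp [pstep]

lemma pstep_cases (s : List Paren) (c : Paren) :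
    pstep s c = c :: s ∨ ∃ t s', c = (false, t) ∧ s = (true, t) :: s' ∧ pstep s c = s' := by
  rcases c with ⟨b, t⟩
  cases b with
  | true => simp
  | false =>
    cases s with
    | nil => left; rfl
    | cons a s' =>
      rcases a with ⟨ab, at'⟩
      cases ab with
      | true =>
        by_cases h : t = at'
        · subst h; right; exact ⟨t, s', rfl, rfl, by simp⟩
        · left; simp [pstep, h]
      | false => left; rfl

lemma dyck_sfold {W : List Paren} (h : Dyck W) : ∀ s, sfold s W = s := by
  induction h with
  | nil => intro s; rfl
  | @wrap Y t hY ih =>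
    intro s
    have : sfold s ((true, t) :: (Y ++ [(false, t)])) =
        sfold (sfold ((true, t) :: s) Y) [(false, t)] := by
      rw [sfold_cons, pstep_open, ← sfold_append]
    rw [this, ih]
    simp
  | app hY hZ ih1 ih2 =>
    intro s
    rw [sfold_append, ih1, ih2]

lemma suffix_pstep {t : ℕ} {r s : List Paren} (h : (false, t) :: r <:+ s) (c : Paren) :
    (false, t) :: r <:+ pstep s c := by
  rcases pstep_cases s c with hc | ⟨t', s', hc1, hc2, hc3⟩
  · rw [hc]; exact h.trans (List.suffix_cons c s)
  · rw [hc3]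
    rw [hc2] at h
    rcases List.suffix_cons_iff.1 h with h | h
    · exact absurd (congrArg List.head? h) (by simp)
    · exact h

lemma suffix_sfold {t : ℕ} {r : List Paren} :
    ∀ (l s : List Paren), (false, t) :: r <:+ s → (false, t) :: r <:+ sfold s l := by
  intro l
  induction l with
  | nil => intro s h; exact h
  | cons c l ih => intro s h; exact ih _ (suffix_pstep h c)

/-- A Dyck word has no adjacent mismatched open-close pair. -/
lemma dyck_no_mismatch {W u v : List Paren} {s t : ℕ} (hW : Dyck W) (hst : s ≠ t)
    (hw : W = u ++ (true, s) :: (false, t) :: v) : False := by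
  have h0 := dyck_sfold hW []
  rw [hw] at h0
  rw [show (u ++ (true, s) :: (false, t) :: v) = (u ++ [(true, s), (false, t)]) ++ v by simp,
    sfold_append, sfold_append] at h0
  have : sfold (sfold [] u) [(true, s), (false, t)]
      = (false, t) :: (true, s) :: sfold [] u := by
    simp [pstep, Ne.symm hst]
  rw [this] at h0
  have := suffix_sfold v ((false, t) :: (true, s) :: sfold [] u) (List.suffix_refl _)
  rw [h0] at this
  simpa using this.length_le

/-- No adjacent matched pair. -/
def Irr (X : List Paren) : Prop := ∀ u v t, X ≠ u ++ (true, t) :: (false, t) :: v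

lemma irr_fold : ∀ (l pre : List Paren), Irr (pre.reverse ++ l) →
    sfold pre l = l.reverse ++ pre := by
  intro l
  induction l with
  | nil => intro pre _; simp
  | cons c l ih =>
    intro pre hirr
    rw [sfold_cons]
    have hpush : pstep pre c = c :: pre := by
      rcases pstep_cases pre c with hc | ⟨t, s', hc1, hc2, _⟩
      · exact hc
      · exfalso
        exact hirr s'.reverse l t (by rw [hc1, hc2]; simp)
    rw [hpush]
    have := ih (c :: pre) (by simpa using hirr)
    rw [this]; simp

/-- Inserting an adjacent matched pair preserves Dyck. -/
lemma dyck_insert {W : List Paren} (h : Dyck W) :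
    ∀ (t : ℕ) (u v : List Paren), W = u ++ v → Dyck (u ++ (true, t) :: (false, t) :: v) := by
  induction h with
  | nil =>
    intro t u v huv
    rcases List.append_eq_nil_iff.1 huv.symm with ⟨rfl, rfl⟩
    exact Dyck.wrap t Dyck.nil
  | @wrap Y t' hY ih =>
    intro t u v huv
    cases u with
    | nil =>
      simp only [List.nil_append] at huv ⊢
      rw [← huv]
      exact Dyck.app (Dyck.wrap t Dyck.nil) (Dyck.wrap t' hY)
    | cons x u' =>
      rw [List.cons_append] at huv
      injection huv with hx hrest
      subst hx
      rcases List.eq_nil_or_concat v with rfl | ⟨v', a, rfl⟩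
      · rw [List.append_nil] at hrest
        have : ((true, t') :: u') ++ (true, t) :: (false, t) :: ([] : List Paren)
            = ((true, t') :: (Y ++ [(false, t')])) ++ ((true, t) :: ([] ++ [(false, t)])) := by
          rw [hrest]; simp
        rw [this]
        exact Dyck.app (Dyck.wrap t' hY) (Dyck.wrap t Dyck.nil)
      · rw [List.concat_eq_append, ← List.append_assoc] at hrest
        obtain ⟨hY2, ha⟩ := List.append_inj' hrest (by simp)
        injection ha with ha _
        subst ha
        have := ih t u' v' hY2
        have goal : Dyck ((true, t') :: ((u' ++ (true, t) :: (false, t) :: v') ++ [(false, t')])) :=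
          Dyck.wrap t' this
        simpa using goal
  | app hY hZ ih1 ih2 =>
    intro t u v huv
    rcases List.append_eq_append_iff.1 huv.symm with ⟨a, ha1, ha2⟩ | ⟨c, hc1, hc2⟩
    · -- Y = u ++ a, v = a ++ Z
      have h1 := ih1 t u a ha1
      have goal := Dyck.app h1 hZ
      rw [ha2]
      simpa using goal
    · -- u = Y ++ c, Z = c ++ v
      have h2 := ih2 t c v hc2
      have goal := Dyck.app hY h2
      rw [hc1]
      simpa using goal

lemma sfold_skip_pair (u v : List Paren) (t : ℕ) (s : List Paren) :
    sfold s (u ++ (true, t) :: (false, t) :: v) = sfold s (u ++ v) := by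
  rw [show u ++ (true, t) :: (false, t) :: v = (u ++ [(true, t), (false, t)]) ++ v by simp,
    sfold_append, sfold_append, sfold_append]
  congr 1
  simp

lemma dyck_of_sfold_aux : ∀ (n : ℕ) (X : List Paren), X.length = n → sfold [] X = [] → Dyck X := by
  intro n
  induction n using Nat.strong_induction_on with
  | _ n ih =>
    intro X hn h0
    by_cases hirr : Irr X
    · have := irr_fold X [] (by simpa using hirr)
      rw [h0] at this
      have : X = [] := by simpa using this.symm
      rw [this]; exact Dyck.nil
    · rw [Irr] at hirr
      push_neg at hirr
      obtain ⟨u, v, t, hX⟩ := hirr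
      have h1 : sfold [] (u ++ v) = [] := by
        rw [← sfold_skip_pair u v t, ← hX, h0]
      have hlen : (u ++ v).length < n := by
        rw [← hn, hX]; simp
      have := ih _ hlen (u ++ v) rfl h1
      rw [hX]
      exact dyck_insert this t u v rfl

lemma dyck_of_sfold {X : List Paren} (h : sfold [] X = []) : Dyck X :=
  dyck_of_sfold_aux X.length X rfl h

/-- Removing an adjacent matched pair preserves Dyck. -/
lemma dyck_remove {u v : List Paren} {t : ℕ}
    (h : Dyck (u ++ (true, t) :: (false, t) :: v)) : Dyck (u ++ v) := by
  apply dyck_of_sfold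
  rw [← sfold_skip_pair u v t]
  exact dyck_sfold h []

/-- From a Dyck word, an opening paren together with a later matching closing paren
can be removed. -/
lemma dyck_remove_open {W : List Paren} (h : Dyck W) :
    ∀ (t : ℕ) (a b : List Paren), W = a ++ (true, t) :: b →
      ∃ b1 b2, b = b1 ++ (false, t) :: b2 ∧ Dyck (a ++ b1 ++ b2) := by
  induction h with
  | nil =>
    intro t a b hab
    exact absurd hab.symm (by simp)
  | @wrap Y t' hY ih =>
    intro t a b hab
    cases a with
    | nil =>
      simp only [List.nil_append] at hab
      injection hab with h1 h2
      injection h1 with _ ht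
      subst ht
      exact ⟨Y, [], by rw [h2], by simpa using hY⟩
    | cons x a' =>
      rw [List.cons_append] at hab
      injection hab with hx hrest
      subst hx
      rcases List.eq_nil_or_concat b with rfl | ⟨b', z, rfl⟩
      · rw [show a' ++ [(true, t)] = a' ++ [(true, t)] from rfl] at hrest
        have : ((false, t') : Paren) = (true, t) := by
          have := congrArg (fun l => l.getLast?) hrest
          simpa using this
        exact absurd this (by simp)
      · rw [List.concat_eq_append, show a' ++ (true, t) :: (b' ++ [z]) =
          (a' ++ (true, t) :: b') ++ [z] by simp] at hrest
        obtain ⟨hY2, hz⟩ := List.append_inj' hrest (by simp)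
        injection hz with hz _
        subst hz
        obtain ⟨b1, b2, hb, hd⟩ := ih t a' b' hY2
        refine ⟨b1, b2 ++ [(false, t')], by rw [hb]; simp, ?_⟩
        have goal := Dyck.wrap t' hd
        rw [show ((true, t') : Paren) :: a' ++ b1 ++ (b2 ++ [(false, t')]) =
          (true, t') :: ((a' ++ b1 ++ b2) ++ [(false, t')]) by simp]
        exact goal
  | @app Y Z hY hZ ih1 ih2 =>
    intro t a b hab
    rcases List.append_eq_append_iff.1 hab.symm with ⟨c, hc1, hc2⟩ | ⟨c, hc1, hc2⟩
    · -- Y = a ++ c, (true,t)::b = c ++ Z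
      cases c with
      | nil =>
        simp only [List.nil_append] at hc2
        obtain ⟨b1, b2, hb, hd⟩ := ih2 t [] b hc2.symm
        rw [List.append_nil] at hc1
        subst hc1
        exact ⟨b1, b2, hb, by simpa using Dyck.app hY (by simpa using hd)⟩
      | cons y c' =>
        injection hc2 with hy hc2'
        subst hy
        obtain ⟨b1, b2, hb, hd⟩ := ih1 t a c' hc1
        refine ⟨b1, b2 ++ Z, by rw [hc2', hb]; simp, ?_⟩
        have goal := Dyck.app hd hZ
        simpa using goal
    · -- a = Y ++ c, Z = c ++ (true,t)::b
      obtain ⟨b1, b2, hb, hd⟩ := ih2 t c b hc2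
      refine ⟨b1, b2, hb, ?_⟩
      have goal := Dyck.app hY hd
      rw [hc1]
      rw [show Y ++ c ++ b1 ++ b2 = Y ++ (c ++ b1 ++ b2) by simp]
      exact goal

/-- From a Dyck word, a closing paren together with an earlier matching opening paren
can be removed. -/
lemma dyck_remove_close {W : List Paren} (h : Dyck W) :
    ∀ (t : ℕ) (a b : List Paren), W = a ++ (false, t) :: b →
      ∃ a1 a2, a = a1 ++ (true, t) :: a2 ∧ Dyck (a1 ++ a2 ++ b) := by
  induction h with
  | nil =>
    intro t a b hab
    exact absurd hab.symm (by simp)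
  | @wrap Y t' hY ih =>
    intro t a b hab
    cases a with
    | nil =>
      simp only [List.nil_append] at hab
      exact absurd (congrArg (fun l => l.head?) hab) (by simp)
    | cons x a' =>
      rw [List.cons_append] at hab
      injection hab with hx hrest
      subst hx
      rcases List.eq_nil_or_concat b with rfl | ⟨b', z, rfl⟩
      · obtain ⟨hY2, hz⟩ := List.append_inj' hrest (by simp)
        injection hz with hz1 _
        injection hz1 with _ ht
        subst ht
        subst hY2
        exact ⟨[], Y, rfl, by simpa using hY⟩
      · rw [List.concat_eq_append, show a' ++ (false, t) :: (b' ++ [z]) =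
          (a' ++ (false, t) :: b') ++ [z] by simp] at hrest
        obtain ⟨hY2, hz⟩ := List.append_inj' hrest (by simp)
        injection hz with hz _
        subst hz
        obtain ⟨a1, a2, ha, hd⟩ := ih t a' b' hY2
        refine ⟨(true, t') :: a1, a2, by rw [ha]; simp, ?_⟩
        have goal := Dyck.wrap t' hd
        simpa using goal
  | @app Y Z hY hZ ih1 ih2 =>
    intro t a b hab
    rcases List.append_eq_append_iff.1 hab.symm with ⟨c, hc1, hc2⟩ | ⟨c, hc1, hc2⟩
    · -- Y = a ++ c, (false,t)::b = c ++ Z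
      cases c with
      | nil =>
        simp only [List.nil_append] at hc2
        obtain ⟨a1, a2, ha, hd⟩ := ih2 t [] b hc2.symm
        exact absurd ha (by simp)
      | cons y c' =>
        injection hc2 with hy hc2'
        subst hy
        obtain ⟨a1, a2, ha, hd⟩ := ih1 t a c' hc1
        refine ⟨a1, a2, ha, ?_⟩
        have goal := Dyck.app hd hZ
        rw [hc2']
        simpa using goal
    · -- a = Y ++ c, Z = c ++ (false,t)::b
      obtain ⟨a1, a2, ha, hd⟩ := ih2 t c b hc2
      refine ⟨Y ++ a1, a2, by rw [hc1, ha]; simp, ?_⟩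
      have goal := Dyck.app hY hd
      rw [show (Y ++ a1) ++ a2 ++ b = Y ++ (a1 ++ a2 ++ b) by simp]
      exact goal

lemma dedDel_set_nonempty (X : List Paren) :
    {d | ∃ Y : List Paren, Y.Sublist X ∧ Dyck Y ∧ d = X.length - Y.length}.Nonempty :=
  ⟨X.length, [], List.nil_sublist X, Dyck.nil, by simp⟩

lemma dedDel_witness (X : List Paren) :
    ∃ W : List Paren, W.Sublist X ∧ Dyck W ∧ dedDel X = X.length - W.length :=
  Nat.sInf_mem (dedDel_set_nonempty X)

lemma dedDel_le {X W : List Paren} (hs : W.Sublist X) (hd : Dyck W) :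
    dedDel X ≤ X.length - W.length :=
  Nat.sInf_le ⟨W, hs, hd, rfl⟩

lemma dedDel_remstep {X Y : List Paren} (h : RemStep X Y) : dedDel Y ≤ dedDel X := by
  obtain ⟨u, v, t, hX, hY⟩ := h
  obtain ⟨W, hs, hd, he⟩ := dedDel_witness X
  have hWlen : W.length ≤ X.length := hs.length_le
  have hXlen : X.length = u.length + v.length + 2 := by rw [hX]; simp; omega
  rw [hX] at hs
  obtain ⟨a, b, rfl, ha, hb⟩ := List.sublist_append_iff.1 hs
  have hau : a.length ≤ u.length := ha.length_le
  have key : ∃ W' : List Paren, W'.Sublist (u ++ v) ∧ Dyck W' ∧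
      (u ++ v).length - W'.length ≤ X.length - (a ++ b).length := by
    rcases List.sublist_cons_iff.1 hb with hb1 | ⟨b1, rfl, hb1⟩
    · rcases List.sublist_cons_iff.1 hb1 with hb2 | ⟨b2, rfl, hb2⟩
      · -- neither taken
        refine ⟨a ++ b, ha.append hb2, hd, ?_⟩
        simp only [List.length_append]
        omega
      · -- only the closing (false, t) taken : W = a ++ (false,t)::b2
        obtain ⟨a1, a2, haa, hdd⟩ := dyck_remove_close hd t a b2 rfl
        have h1 : (a1 ++ a2).Sublist a := haa ▸ ((List.sublist_cons_self _ _).append_left a1)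
        refine ⟨a1 ++ a2 ++ b2, (h1.trans ha).append hb2, hdd, ?_⟩
        have hla : a.length = a1.length + a2.length + 1 := by rw [haa]; simp; omega
        simp only [List.length_append, List.length_cons] at hWlen ⊢
        omega
    · rcases List.sublist_cons_iff.1 hb1 with hb2 | ⟨b2, rfl, hb2⟩
      · -- only the opening taken : W = a ++ (true,t)::b1
        obtain ⟨c1, c2, hbb, hdd⟩ := dyck_remove_open hd t a b1 rfl
        have h1 : (c1 ++ c2).Sublist b1 := hbb ▸ ((List.sublist_cons_self _ _).append_left c1)
        refine ⟨a ++ c1 ++ c2, by rw [List.append_assoc]; exact ha.append (h1.trans hb2), hdd, ?_⟩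
        have hlb : b1.length = c1.length + c2.length + 1 := by rw [hbb]; simp; omega
        simp only [List.length_append, List.length_cons] at hWlen ⊢
        omega
      · -- both taken, adjacent: W = a ++ (true,t)::(false,t)::b2
        have hdd := dyck_remove hd
        refine ⟨a ++ b2, ha.append hb2, hdd, ?_⟩
        simp only [List.length_append, List.length_cons] at hWlen ⊢
        omega
  obtain ⟨W', hs', hd', hle⟩ := key
  rw [hY, he]
  exact (dedDel_le hs' hd').trans hle

/-- adjacent mismatched peaks -/
def cb (Y : List Paren) : ℕ :=
  (Y.zip Y.tail).countP (fun p => p.1.1 && !p.2.1 && !(p.1.2 == p.2.2))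

def peaks (Y : List Paren) : ℕ :=
  (Y.zip Y.tail).countP (fun p => p.1.1 && !p.2.1)

lemma descents_cons_cons (a b : Paren) (l : List Paren) :
    descents (a :: b :: l) = descents (b :: l) + (if (!a.1 && b.1) then 1 else 0) := by
  simp [descents, List.countP_cons]

lemma peaks_cons_cons (a b : Paren) (l : List Paren) :
    peaks (a :: b :: l) = peaks (b :: l) + (if (a.1 && !b.1) then 1 else 0) := by
  simp [peaks, List.countP_cons]

lemma cb_cons_cons (a b : Paren) (l : List Paren) :
    cb (a :: b :: l) = cb (b :: l) + (if (a.1 && !b.1 && !(a.2 == b.2)) then 1 else 0) := by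
  simp [cb, List.countP_cons]

lemma descents_le_peaks : ∀ Y : List Paren,
    descents Y ≤ peaks Y + (if Y.head?.all (·.1) then 0 else 1) := by
  intro Y
  induction Y with
  | nil => simp [descents, peaks]
  | cons a l ih =>
    cases l with
    | nil => simp [descents, peaks]
    | cons b l' =>
      rw [descents_cons_cons, peaks_cons_cons]
      rcases a with ⟨ab, ta⟩
      rcases b with ⟨bb, tb⟩
      simp only [List.head?_cons] at ih ⊢
      cases ab <;> cases bb <;> simp_all <;> omega

lemma mem_zip_adj : ∀ (Y : List Paren) (p : Paren × Paren),
    p ∈ Y.zip Y.tail → ∃ u v, Y = u ++ p.1 :: p.2 :: v := by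
  intro Y
  induction Y with
  | nil => simp
  | cons a l ih =>
    intro p hp
    cases l with
    | nil => simp at hp
    | cons b l' =>
      simp only [List.tail_cons, List.zip_cons_cons, List.mem_cons] at hp
      rcases hp with rfl | hp
      · exact ⟨[], l', rfl⟩
      · obtain ⟨u, v, huv⟩ := ih p (by simpa using hp)
        exact ⟨a :: u, v, by rw [List.cons_append, ← huv]⟩

lemma peaks_eq_cb_of_irr {Y : List Paren} (h : Irr Y) : peaks Y = cb Y := by
  unfold peaks cb
  apply List.countP_congr
  intro p hp
  obtain ⟨u, v, huv⟩ := mem_zip_adj Y p hp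
  rcases p with ⟨⟨pb, pt⟩, ⟨qb, qt⟩⟩
  cases pb <;> cases qb <;> simp
  have hne : pt ≠ qt := by
    intro h'
    exact h u v pt (by rw [huv, h'])
  simp [hne]

/-- no adjacent mismatched open/close pair -/
def NoBad (W : List Paren) : Prop :=
  ∀ u v (s t : ℕ), s ≠ t → W ≠ u ++ (true, s) :: (false, t) :: v

lemma nobad_of_dyck {W : List Paren} (h : Dyck W) : NoBad W := by
  intro u v s t hst hw
  exact dyck_no_mismatch h hst hw

lemma nobad_tail {a : Paren} {l : List Paren} (h : NoBad (a :: l)) : NoBad l := by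
  intro u v s t hst hl
  exact h (a :: u) v s t hst (by rw [hl, List.cons_append])

/-- Each mismatched adjacent open/close pair in `Y` forces a deletion. -/
lemma cb_le_del : ∀ (n : ℕ) (Y W : List Paren), Y.length = n → W.Sublist Y → NoBad W →
    cb Y + W.length ≤ Y.length := by
  intro n
  induction n using Nat.strong_induction_on with
  | _ n ih =>
    intro Y W hn hs hnb
    match Y, hn with
    | [], hn =>
      rw [List.sublist_nil.1 hs]
      simp [cb]
    | [a], hn =>
      have := hs.length_le
      simp only [cb, List.tail_cons, List.zip_nil_right, List.countP_nil, List.length_cons,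
        List.length_nil] at this ⊢
      omega
    | a :: b :: Y', hn =>
      have hn' : Y'.length + 2 = n := by simpa using hn
      subst hn'
      rw [cb_cons_cons]
      rcases List.sublist_cons_iff.1 hs with hW | ⟨W', rfl, hW'⟩
      · -- W <+ b :: Y'
        have h1 := ih (Y'.length + 1) (by omega) (b :: Y') W rfl hW hnb
        simp only [List.length_cons] at h1 ⊢
        split <;> omega
      · rcases List.sublist_cons_iff.1 hW' with hW2 | ⟨W2, rfl, hW2⟩
        · -- a kept, b skipped : W = a :: W', W' <+ Y'
          by_cases hbad : (a.1 && !b.1 && !(a.2 == b.2)) = true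
          · -- then b is a closing paren, so the pair starting at b is not a peak
            have hb1 : b.1 = false := by
              rcases a with ⟨ab, ta⟩; rcases b with ⟨bb, tb⟩
              simp only [Bool.and_eq_true, Bool.not_eq_true'] at hbad
              exact hbad.1.2
            have hcb : cb (b :: Y') = cb Y' := by
              cases Y' with
              | nil => simp [cb]
              | cons c Y'' =>
                rw [cb_cons_cons]
                simp [hb1]
            have h1 := ih Y'.length (by omega) Y' W' rfl hW2 (nobad_tail hnb)
            rw [hcb, if_pos hbad]
            simp only [List.length_cons] at h1 ⊢
            omega
          · have h1 := ih (Y'.length + 1) (by omega) (b :: Y') W' rfl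
              (hW2.trans (List.sublist_cons_self _ _)) (nobad_tail hnb)
            rw [if_neg hbad]
            simp only [List.length_cons] at h1 ⊢
            omega
        · -- both a and b kept : W = a :: b :: W2
          have hnbad : ¬(a.1 && !b.1 && !(a.2 == b.2)) = true := by
            intro hbad
            rcases a with ⟨ab, ta⟩; rcases b with ⟨bb, tb⟩
            simp only [Bool.and_eq_true, Bool.not_eq_true'] at hbad
            obtain ⟨⟨h1, h2⟩, h3⟩ := hbad
            subst h1; subst h2
            exact hnb [] W2 ta tb (by simpa using h3) rfl
          have h1 := ih (Y'.length + 1) (by omega) (b :: Y') (b :: W2) rfl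
            (hW2.cons₂ b) (nobad_tail hnb)
          rw [if_neg hnbad]
          simp only [List.length_cons] at h1 ⊢
          omega

lemma cb_le_dedDel (Y : List Paren) : cb Y ≤ dedDel Y := by
  obtain ⟨W, hs, hd, he⟩ := dedDel_witness Y
  have h1 := cb_le_del Y.length Y W rfl hs (nobad_of_dyck hd)
  have h2 := hs.length_le
  omega

lemma one_le_dedDel {Y : List Paren} (hirr : Irr Y) (hne : Y ≠ []) : 1 ≤ dedDel Y := by
  by_contra h
  push_neg at h
  interval_cases hz : dedDel Y
  obtain ⟨W, hs, hd, he⟩ := dedDel_witness Y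
  rw [hz] at he
  have h2 := hs.length_le
  have hWY : W = Y := hs.eq_of_length (by omega)
  subst hWY
  have h3 := dyck_sfold hd []
  have h4 := irr_fold W [] (by simpa using hirr)
  rw [h3] at h4
  exact hne (by simpa using h4.symm)

lemma dedDel_chain {X Y : List Paren} (h : Relation.ReflTransGen RemStep X Y) :
    dedDel Y ≤ dedDel X := by
  induction h with
  | refl => exact le_rfl
  | tail _ hstep ih => exact (dedDel_remstep hstep).trans ih

/-- If `X-hat` is obtained from `X` by iteratively removing adjacent matching pairs
until none remain, and `X-hat` is nonempty, then the number of maximal LR-segments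
of `X-hat` is at most `ded_d(X)` up to a constant factor. -/
theorem stmt17 :
    ∃ C : ℕ, 0 < C ∧ ∀ X Y : List Paren,
      Relation.ReflTransGen RemStep X Y →
      (¬∃ Z, RemStep Y Z) →
      Y ≠ [] →
      descents Y + 1 ≤ C * dedDel X := by
  refine ⟨3, by norm_num, fun X Y hchain hstuck hne => ?_⟩
  have hirr : Irr Y := by
    intro u v t hY
    exact hstuck ⟨u ++ v, u, v, t, hY, rfl⟩
  have h1 : descents Y ≤ peaks Y + 1 := by
    have := descents_le_peaks Y
    split at this <;> omega
  have h2 : peaks Y = cb Y := peaks_eq_cb_of_irr hirr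
  have h3 : cb Y ≤ dedDel Y := cb_le_dedDel Y
  have h4 : 1 ≤ dedDel Y := one_le_dedDel hirr hne
  have h5 : dedDel Y ≤ dedDel X := dedDel_chain hchain
  omega
end
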